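/- arXiv:1905.12648 — 7 statements merged into one kernel-verified Lean document; each statement's English description precedes it below -/
import Mathlib

section
/- Let ℓ_z for z ∈ M_k each be L-smooth and convex with average f_k, let f be differentiable with minimizer x* (∇f(x*) = 0), and suppose f - f_k is c-restricted smooth w.r.t. x*. Then for any y⁰, the average over z ∈ M_k of ‖∇ℓ_z(x*) - ∇ℓ_z(y⁰) + ∇f(y⁰)‖² is at most 4L·(f(y⁰) - f(x*)) + c(4L + 2c)·‖y⁰ - x*‖². -/
/-!
Write `a z = ∇ℓ_z x* - ∇ℓ_z y⁰`. The average of `‖a z + ∇f y⁰‖²` exceeds the average of `‖a z‖²`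
by at most the squared norm of `mean a + ∇f y⁰ = ∇(f - f_k) y⁰ - ∇(f - f_k) x*`, which restricted
smoothness bounds by `c² ‖y⁰ - x*‖²`. Co-coercivity of convex `L`-smooth functions bounds each
`‖a z‖²` by `2L` times the Bregman divergence of `ℓ_z` from `x*` to `y⁰`; these average to the
Bregman divergence `D` of `f_k`, and `D = (f y⁰ - f x*) - D_{f - f_k}` with
`|D_{f - f_k}| ≤ c/2 ‖y⁰ - x*‖²`, again by restricted smoothness.
-/

open InnerProductSpace Finset
open scoped NNReal

section

variable {E : Type*} [NormedAddCommGroup E] [InnerProductSpace ℝ E]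

theorem sum_norm_add_sq_div_card_le {ι : Type*} (s : Finset ι) (a : ι → E) (v : E) :
    (∑ i ∈ s, ‖a i + v‖ ^ 2) / #s ≤
      (∑ i ∈ s, ‖a i‖ ^ 2) / #s + ‖(#s : ℝ)⁻¹ • ∑ i ∈ s, a i + v‖ ^ 2 := by
  rcases s.eq_empty_or_nonempty with rfl | hs
  · simp
  have hn : (0 : ℝ) < #s := by exact_mod_cast hs.card_pos
  simp_rw [norm_add_sq_real (a _) v]
  rw [sum_add_distrib, sum_add_distrib, ← mul_sum, ← sum_inner, sum_const, nsmul_eq_mul,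
    norm_add_sq_real, real_inner_smul_left]
  have hexpand : (∑ i ∈ s, ‖a i‖ ^ 2 + 2 * ⟪∑ i ∈ s, a i, v⟫_ℝ + #s * ‖v‖ ^ 2) / #s =
      (∑ i ∈ s, ‖a i‖ ^ 2) / #s + (2 * ((#s : ℝ)⁻¹ * ⟪∑ i ∈ s, a i, v⟫_ℝ) + ‖v‖ ^ 2) := by
    field_simp
    ring
  rw [hexpand]
  nlinarith [sq_nonneg ‖(#s : ℝ)⁻¹ • ∑ i ∈ s, a i‖]

variable [CompleteSpace E]

noncomputable def bregman (φ : E → ℝ) (x y : E) : ℝ := φ y - φ x - ⟪gradient φ x, y - x⟫_ℝ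

theorem hasDerivAt_comp_add_smul {φ : E → ℝ} {x v : E} {t : ℝ}
    (hφ : DifferentiableAt ℝ φ (x + t • v)) :
    HasDerivAt (fun s : ℝ => φ (x + s • v)) ⟪gradient φ (x + t • v), v⟫_ℝ t := by
  have hline : HasDerivAt (fun s : ℝ => x + s • v) v t := by
    simpa using ((hasDerivAt_id t).smul_const v).const_add x
  have h := hφ.hasGradientAt.hasFDerivAt.comp_hasDerivAt t hline
  rwa [toDual_apply_apply] at h

theorem bregman_nonneg {φ : E → ℝ} (hconv : ConvexOn ℝ Set.univ φ) (hφ : Differentiable ℝ φ)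
    (x y : E) : 0 ≤ bregman φ x y := by
  have hline : ConvexOn ℝ Set.univ (fun s : ℝ => φ (x + s • (y - x))) := by
    refine (hconv.comp_affineMap (AffineMap.lineMap x y)).congr fun s _ => ?_
    simp [AffineMap.lineMap_apply_module', add_comm]
  have hderiv := hasDerivAt_comp_add_smul (x := x) (v := y - x) (t := 0) (hφ _)
  rw [zero_smul, add_zero] at hderiv
  have hslope := hline.le_slope_of_hasDerivAt (Set.mem_univ 0) (Set.mem_univ 1) one_pos hderiv
  simp only [slope_def_field, one_smul, zero_smul, add_zero, add_sub_cancel, sub_zero,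
    div_one] at hslope
  rw [bregman]
  linarith

theorem abs_bregman_le {φ : E → ℝ} (hφ : Differentiable ℝ φ) {K : ℝ} {x : E}
    (hK : ∀ w, ‖gradient φ w - gradient φ x‖ ≤ K * ‖w - x‖) (y : E) :
    |bregman φ x y| ≤ K / 2 * ‖y - x‖ ^ 2 := by
  set v := y - x
  set h : ℝ → ℝ := fun t => φ (x + t • v) - φ x - t * ⟪gradient φ x, v⟫_ℝ
  have hderiv : ∀ t, HasDerivAt h ⟪gradient φ (x + t • v) - gradient φ x, v⟫_ℝ t := fun t => by
    rw [inner_sub_left]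
    exact (((hasDerivAt_comp_add_smul (hφ _)).sub_const (φ x)).sub
      ((hasDerivAt_id t).mul_const ⟪gradient φ x, v⟫_ℝ)).congr_deriv (by simp)
  have hbound : ∀ t ∈ Set.Ico (0 : ℝ) 1,
      ‖⟪gradient φ (x + t • v) - gradient φ x, v⟫_ℝ‖ ≤ K * t * ‖v‖ ^ 2 := fun t ht => by
    calc ‖⟪gradient φ (x + t • v) - gradient φ x, v⟫_ℝ‖
        ≤ ‖gradient φ (x + t • v) - gradient φ x‖ * ‖v‖ := norm_inner_le_norm _ _
      _ ≤ K * ‖t • v‖ * ‖v‖ := by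
          gcongr
          simpa using hK (x + t • v)
      _ = K * t * ‖v‖ ^ 2 := by rw [norm_smul, Real.norm_of_nonneg ht.1]; ring
  have := image_norm_le_of_norm_deriv_right_le_deriv_boundary
    (fun t _ => (hderiv t).continuousAt.continuousWithinAt) (fun t _ => (hderiv t).hasDerivWithinAt)
    (B := fun t => K / 2 * t ^ 2 * ‖v‖ ^ 2) (by simp [h])
    (fun t => (((hasDerivAt_pow 2 t).const_mul (K / 2)).mul_const (‖v‖ ^ 2)).congr_deriv (by ring))
    hbound (Set.right_mem_Icc.2 zero_le_one)
  simpa [h, bregman, v] using this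

theorem norm_sub_gradient_sq_le_bregman {φ : E → ℝ} (hconv : ConvexOn ℝ Set.univ φ)
    (hφ : Differentiable ℝ φ) {K : ℝ≥0} (hlip : LipschitzWith K (gradient φ)) (x y : E) :
    ‖gradient φ x - gradient φ y‖ ^ 2 ≤ 2 * K * bregman φ x y := by
  have hK : ∀ u w, ‖gradient φ u - gradient φ w‖ ≤ K * ‖u - w‖ := fun u w => by
    simpa [dist_eq_norm] using hlip.dist_le_mul u w
  rcases K.zero_le_coe.eq_or_lt with hK0 | hKpos
  · have := hK x y
    rw [← hK0, zero_mul, norm_le_zero_iff] at this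
    simp [this, ← hK0]
  set δ := gradient φ y - gradient φ x
  -- Compare the first-order lower bound at `x` with the descent upper bound at `y`,
  -- both evaluated at the gradient step `w` taken from `y`.
  set w := y - (K : ℝ)⁻¹ • δ
  have hlower := bregman_nonneg hconv hφ x w
  have hupper := (le_abs_self _).trans (abs_bregman_le hφ (fun u => hK u y) w)
  have hwx : w - x = (y - x) - (K : ℝ)⁻¹ • δ := by simp only [w]; abel
  have hwy : w - y = -((K : ℝ)⁻¹ • δ) := by simp only [w]; abel
  rw [bregman, hwx, inner_sub_right, real_inner_smul_right] at hlower
  rw [bregman, hwy, inner_neg_right, real_inner_smul_right, norm_neg, norm_smul,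
    Real.norm_of_nonneg (inv_nonneg.2 hKpos.le)] at hupper
  have hδ : (K : ℝ)⁻¹ * ⟪gradient φ y, δ⟫_ℝ - (K : ℝ)⁻¹ * ⟪gradient φ x, δ⟫_ℝ =
      (K : ℝ)⁻¹ * ‖δ‖ ^ 2 := by
    rw [← mul_sub, ← inner_sub_left, real_inner_self_eq_norm_sq]
  have hsq : (K : ℝ) / 2 * ((K : ℝ)⁻¹ * ‖δ‖) ^ 2 = (K : ℝ)⁻¹ * ‖δ‖ ^ 2 / 2 := by
    field_simp
  have key : (K : ℝ)⁻¹ * ‖δ‖ ^ 2 / 2 ≤ bregman φ x y := by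
    rw [bregman]
    linarith
  rw [norm_sub_rev]
  calc ‖δ‖ ^ 2 = 2 * K * ((K : ℝ)⁻¹ * ‖δ‖ ^ 2 / 2) := by field_simp
    _ ≤ 2 * K * bregman φ x y := by gcongr

theorem gradient_fun_sub {φ ψ : E → ℝ} {x : E} (hφ : DifferentiableAt ℝ φ x)
    (hψ : DifferentiableAt ℝ ψ x) :
    gradient (fun w => φ w - ψ w) x = gradient φ x - gradient ψ x := by
  refine HasGradientAt.gradient ?_
  rw [hasGradientAt_iff_hasFDerivAt, map_sub]
  exact hφ.hasGradientAt.hasFDerivAt.sub hψ.hasGradientAt.hasFDerivAt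

theorem bregman_fun_sub {φ ψ : E → ℝ} (hφ : Differentiable ℝ φ) (hψ : Differentiable ℝ ψ)
    (x y : E) : bregman (fun w => φ w - ψ w) x y = bregman φ x y - bregman ψ x y := by
  simp only [bregman, gradient_fun_sub (hφ x) (hψ x), inner_sub_left]
  ring

theorem bregman_le_of_gradient_eq_zero {φ ψ : E → ℝ} (hφ : Differentiable ℝ φ)
    (hψ : Differentiable ℝ ψ) {K : ℝ} {x : E} (hx : gradient φ x = 0)
    (hK : ∀ w, ‖gradient (fun w => φ w - ψ w) w - gradient (fun w => φ w - ψ w) x‖ ≤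
      K * ‖w - x‖) (y : E) :
    bregman ψ x y ≤ φ y - φ x + K / 2 * ‖y - x‖ ^ 2 := by
  have hsmooth := abs_bregman_le (φ := fun w => φ w - ψ w) (hφ.sub hψ) hK y
  have hφxy : bregman φ x y = φ y - φ x := by simp [bregman, hx]
  rw [bregman_fun_sub hφ hψ, hφxy] at hsmooth
  linarith [neg_abs_le (φ y - φ x - bregman ψ x y)]

section Average

variable {ι : Type*} (M : Finset ι) (ℓ : ι → E → ℝ)

theorem hasGradientAt_sum_div_card (hℓ : ∀ z ∈ M, Differentiable ℝ (ℓ z)) (x : E) :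
    HasGradientAt (fun w => (∑ z ∈ M, ℓ z w) / #M) ((#M : ℝ)⁻¹ • ∑ z ∈ M, gradient (ℓ z) x) x := by
  simp_rw [div_eq_inv_mul]
  rw [hasGradientAt_iff_hasFDerivAt, map_smul, map_sum]
  exact (HasFDerivAt.fun_sum fun z hz => ((hℓ z hz) x).hasGradientAt.hasFDerivAt).const_mul _

theorem gradient_sum_div_card (hℓ : ∀ z ∈ M, Differentiable ℝ (ℓ z)) (x : E) :
    gradient (fun w => (∑ z ∈ M, ℓ z w) / #M) x = (#M : ℝ)⁻¹ • ∑ z ∈ M, gradient (ℓ z) x :=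
  (hasGradientAt_sum_div_card M ℓ hℓ x).gradient

theorem bregman_sum_div_card (hℓ : ∀ z ∈ M, Differentiable ℝ (ℓ z)) (x y : E) :
    bregman (fun w => (∑ z ∈ M, ℓ z w) / #M) x y = (∑ z ∈ M, bregman (ℓ z) x y) / #M := by
  simp only [bregman, gradient_sum_div_card M ℓ hℓ, real_inner_smul_left, sum_inner,
    sum_sub_distrib]
  ring

theorem bregman_sum_div_card_nonneg (hℓ : ∀ z ∈ M, Differentiable ℝ (ℓ z))
    (hconv : ∀ z ∈ M, ConvexOn ℝ Set.univ (ℓ z)) (x y : E) :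
    0 ≤ bregman (fun w => (∑ z ∈ M, ℓ z w) / #M) x y := by
  rw [bregman_sum_div_card M ℓ hℓ]
  exact div_nonneg (sum_nonneg fun z hz => bregman_nonneg (hconv z hz) (hℓ z hz) x y)
    (Nat.cast_nonneg _)

theorem sum_norm_sub_gradient_sq_div_card_le (hℓ : ∀ z ∈ M, Differentiable ℝ (ℓ z))
    (hconv : ∀ z ∈ M, ConvexOn ℝ Set.univ (ℓ z)) {K : ℝ≥0}
    (hlip : ∀ z ∈ M, LipschitzWith K (gradient (ℓ z))) (x y : E) :
    (∑ z ∈ M, ‖gradient (ℓ z) x - gradient (ℓ z) y‖ ^ 2) / #M ≤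
      2 * K * bregman (fun w => (∑ z ∈ M, ℓ z w) / #M) x y := by
  rw [bregman_sum_div_card M ℓ hℓ, mul_div_assoc', mul_sum]
  gcongr with z hz
  exact norm_sub_gradient_sq_le_bregman (hconv z hz) (hℓ z hz) (hlip z hz) x y

end Average

end

theorem statement6_general {d : ℕ} {ι : Type*} (M : Finset ι)
    (ℓ : ι → EuclideanSpace ℝ (Fin d) → ℝ) (L c : ℝ) (hL : 0 ≤ L)
    (hdiff : ∀ z ∈ M, Differentiable ℝ (ℓ z))
    (hconv : ∀ z ∈ M, ConvexOn ℝ Set.univ (ℓ z))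
    (hlip : ∀ z ∈ M, LipschitzWith L.toNNReal (gradient (ℓ z)))
    (f fk : EuclideanSpace ℝ (Fin d) → ℝ)
    (hfk : ∀ x, fk x = (∑ z ∈ M, ℓ z x) / M.card)
    (hf : Differentiable ℝ f)
    (xstar : EuclideanSpace ℝ (Fin d)) (hgrad0 : gradient f xstar = 0)
    (hr : ∀ y, ‖gradient (fun x => f x - fk x) xstar
        - gradient (fun x => f x - fk x) y‖ ≤ c * ‖xstar - y‖)
    (y0 : EuclideanSpace ℝ (Fin d)) :
    (∑ z ∈ M, ‖gradient (ℓ z) xstar - gradient (ℓ z) y0 + gradient f y0‖ ^ 2) / M.card ≤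
      4 * L * (f y0 - f xstar) + c * (4 * L + 2 * c) * ‖y0 - xstar‖ ^ 2 := by
  have hfk_eq : fk = fun x => (∑ z ∈ M, ℓ z x) / #M := funext hfk
  have hfkd : Differentiable ℝ fk :=
    hfk_eq ▸ fun x => (hasGradientAt_sum_div_card M ℓ hdiff x).differentiableAt
  have hvar : ‖(#M : ℝ)⁻¹ • ∑ z ∈ M, (gradient (ℓ z) xstar - gradient (ℓ z) y0) +
      gradient f y0‖ ≤ c * ‖y0 - xstar‖ := by
    have hmean : (#M : ℝ)⁻¹ • ∑ z ∈ M, (gradient (ℓ z) xstar - gradient (ℓ z) y0) +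
        gradient f y0 =
          gradient (fun x => f x - fk x) y0 - gradient (fun x => f x - fk x) xstar := by
      rw [gradient_fun_sub (hf _) (hfkd _), gradient_fun_sub (hf _) (hfkd _), hfk_eq,
        gradient_sum_div_card M ℓ hdiff, gradient_sum_div_card M ℓ hdiff, hgrad0,
        sum_sub_distrib, smul_sub]
      abel
    rw [hmean, norm_sub_rev, norm_sub_rev y0]
    exact hr y0
  have hcoc : (∑ z ∈ M, ‖gradient (ℓ z) xstar - gradient (ℓ z) y0‖ ^ 2) / #M ≤
      2 * L * bregman fk xstar y0 := by
    simpa [hfk_eq, Real.coe_toNNReal L hL] using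
      sum_norm_sub_gradient_sq_div_card_le M ℓ hdiff hconv hlip xstar y0
  have hB0 : 0 ≤ bregman fk xstar y0 := hfk_eq ▸ bregman_sum_div_card_nonneg M ℓ hdiff hconv _ _
  have hB : bregman fk xstar y0 ≤ f y0 - f xstar + c / 2 * ‖y0 - xstar‖ ^ 2 :=
    bregman_le_of_gradient_eq_zero hf hfkd hgrad0
      (fun w => by rw [norm_sub_rev, norm_sub_rev w]; exact hr w) y0
  have hcu : 0 ≤ c * ‖y0 - xstar‖ := (norm_nonneg _).trans hvar
  calc _ ≤ (∑ z ∈ M, ‖gradient (ℓ z) xstar - gradient (ℓ z) y0‖ ^ 2) / #M +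
        ‖(#M : ℝ)⁻¹ • ∑ z ∈ M, (gradient (ℓ z) xstar - gradient (ℓ z) y0) + gradient f y0‖ ^ 2 :=
        sum_norm_add_sq_div_card_le M _ _
    _ ≤ 2 * L * bregman fk xstar y0 + (c * ‖y0 - xstar‖) ^ 2 := by gcongr
    _ ≤ _ := by
        nlinarith [mul_nonneg hL hB0, mul_le_mul_of_nonneg_left hB hL,
          mul_nonneg (mul_nonneg hL (norm_nonneg (y0 - xstar))) hcu]

/-- second supply-rate bound of Lemma 2 (SVRG variance term). -/
theorem statement6 {d : ℕ} {ι : Type*} (M : Finset ι) (hM : M.Nonempty)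
    (ℓ : ι → EuclideanSpace ℝ (Fin d) → ℝ) (L c : ℝ) (hL : 0 ≤ L) (hc : 0 ≤ c)
    (hdiff : ∀ z ∈ M, Differentiable ℝ (ℓ z))
    (hconv : ∀ z ∈ M, ConvexOn ℝ Set.univ (ℓ z))
    (hlip : ∀ z ∈ M, LipschitzWith L.toNNReal (gradient (ℓ z)))
    (f fk : EuclideanSpace ℝ (Fin d) → ℝ)
    (hfk : ∀ x, fk x = (∑ z ∈ M, ℓ z x) / M.card)
    (hf : Differentiable ℝ f) (hfkd : Differentiable ℝ fk)
    (xstar : EuclideanSpace ℝ (Fin d)) (hgrad0 : gradient f xstar = 0)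
    (hr : ∀ y, ‖gradient (fun x => f x - fk x) xstar
        - gradient (fun x => f x - fk x) y‖ ≤ c * ‖xstar - y‖)
    (y0 : EuclideanSpace ℝ (Fin d)) :
    (∑ z ∈ M, ‖gradient (ℓ z) xstar - gradient (ℓ z) y0 + gradient f y0‖ ^ 2) / M.card ≤
      4 * L * (f y0 - f xstar) + c * (4 * L + 2 * c) * ‖y0 - xstar‖ ^ 2 :=
  statement6_general M ℓ L c hL hdiff hconv hlip f fk hfk hf xstar hgrad0 hr y0
end

section
/- Let f be convex differentiable with minimizer x*, let f_k be differentiable with f - f_k being c-restricted smooth w.r.t. x*. Then for any points y^s and y⁰, -2⟨y^s - x*, ∇f_k(y^s) - ∇f_k(y⁰) + ∇f(y⁰)⟩ ≤ -2(f(y^s) - f(x*)) + 3c‖y^s - x*‖² + c‖y⁰ - x*‖². -/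
/-!
Write `g = f - fk`. The inner product splits as `⟪ys - x*, ∇f ys⟫ + ⟪ys - x*, ∇g y0 - ∇g ys⟫`.
Convexity of `f` bounds the first term below by `f ys - f x*`. For the second, write
`∇g y0 - ∇g ys = (∇g x* - ∇g ys) - (∇g x* - ∇g y0)`: restricted smoothness bounds the two pieces by
`c‖ys - x*‖` and `c‖y0 - x*‖`, and Cauchy–Schwarz with `2ab ≤ a² + b²` gives the quadratic terms.
-/

open InnerProductSpace

theorem ConvexOn.sub_le_fderiv_apply_sub {E : Type*} [NormedAddCommGroup E] [NormedSpace ℝ E]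
    {s : Set E} {f : E → ℝ} (hf : ConvexOn ℝ s f) {x y : E} (hx : x ∈ s) (hy : y ∈ s)
    (hfy : DifferentiableAt ℝ f y) :
    f y - f x ≤ fderiv ℝ f y (y - x) := by
  let L : ℝ →ᵃ[ℝ] E := AffineMap.lineMap x y
  have hconv : ConvexOn ℝ (L ⁻¹' s) (f ∘ L) := hf.comp_affineMap L
  have hderiv : HasDerivAt (f ∘ L) (fderiv ℝ f y (y - x)) 1 := by
    have hfy' : HasFDerivAt f (fderiv ℝ f y) (L 1) := by
      simpa [L] using hfy.hasFDerivAt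
    exact hfy'.comp_hasDerivAt 1 AffineMap.hasDerivAt_lineMap
  have hslope := hconv.slope_le_of_hasDerivAt (x := 0) (by simpa [L] using hx)
    (by simpa [L] using hy) zero_lt_one hderiv
  simpa [L, slope_def_field] using hslope

theorem ConvexOn.sub_le_inner_gradient {F : Type*} [NormedAddCommGroup F]
    [InnerProductSpace ℝ F] [CompleteSpace F] {s : Set F} {f : F → ℝ} (hf : ConvexOn ℝ s f)
    {x y : F} (hx : x ∈ s) (hy : y ∈ s) (hfy : DifferentiableAt ℝ f y) :
    f y - f x ≤ ⟪y - x, gradient f y⟫_ℝ := by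
  rw [real_inner_comm, inner_gradient_left]
  exact hf.sub_le_fderiv_apply_sub hx hy hfy

theorem gradient_fun_sub_s7 {F : Type*} [NormedAddCommGroup F] [InnerProductSpace ℝ F]
    [CompleteSpace F] {f g : F → ℝ} {x : F} (hf : DifferentiableAt ℝ f x)
    (hg : DifferentiableAt ℝ g x) :
    gradient (fun y => f y - g y) x = gradient f x - gradient g x := by
  simp only [gradient, fderiv_fun_sub hf hg, map_sub]

theorem neg_two_mul_inner_sub_le {F : Type*} [NormedAddCommGroup F] [InnerProductSpace ℝ F]
    {a b u v : F} {c : ℝ} (hc : 0 ≤ c) (hu : ‖u‖ ≤ c * ‖a‖) (hv : ‖v‖ ≤ c * ‖b‖) :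
    -2 * ⟪a, u - v⟫_ℝ ≤ 3 * c * ‖a‖ ^ 2 + c * ‖b‖ ^ 2 := by
  have hau : -⟪a, u⟫_ℝ ≤ c * ‖a‖ ^ 2 :=
    calc -⟪a, u⟫_ℝ ≤ ‖a‖ * ‖u‖ := neg_le.mp (abs_le.mp (abs_real_inner_le_norm a u)).1
      _ ≤ ‖a‖ * (c * ‖a‖) := by gcongr
      _ = c * ‖a‖ ^ 2 := by ring
  have hav : ⟪a, v⟫_ℝ ≤ c / 2 * (‖a‖ ^ 2 + ‖b‖ ^ 2) :=
    calc ⟪a, v⟫_ℝ ≤ ‖a‖ * ‖v‖ := real_inner_le_norm a v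
      _ ≤ ‖a‖ * (c * ‖b‖) := by gcongr
      _ ≤ c / 2 * (‖a‖ ^ 2 + ‖b‖ ^ 2) := by
        nlinarith [mul_nonneg hc (sq_nonneg (‖a‖ - ‖b‖))]
  rw [inner_sub_right]
  linarith

theorem statement7_general {d : ℕ} (f fk : EuclideanSpace ℝ (Fin d) → ℝ) (c : ℝ) (hc : 0 ≤ c)
    (hf : Differentiable ℝ f) (hconv : ConvexOn ℝ Set.univ f)
    (hfk : Differentiable ℝ fk)
    (xstar : EuclideanSpace ℝ (Fin d))
    (hr : ∀ y, ‖gradient (fun x => f x - fk x) xstar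
        - gradient (fun x => f x - fk x) y‖ ≤ c * ‖xstar - y‖)
    (ys y0 : EuclideanSpace ℝ (Fin d)) :
    -2 * ⟪ys - xstar, gradient fk ys - gradient fk y0 + gradient f y0⟫_ℝ ≤
      -2 * (f ys - f xstar) + 3 * c * ‖ys - xstar‖ ^ 2 + c * ‖y0 - xstar‖ ^ 2 := by
  set g := fun x => f x - fk x
  have hg : ∀ y, gradient g y = gradient f y - gradient fk y :=
    fun y => gradient_fun_sub_s7 (hf y) (hfk y)
  have hsplit : gradient fk ys - gradient fk y0 + gradient f y0 = gradient f ys +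
      ((gradient g xstar - gradient g ys) - (gradient g xstar - gradient g y0)) := by
    simp only [hg]
    abel
  have hdescent : f ys - f xstar ≤ ⟪ys - xstar, gradient f ys⟫_ℝ :=
    hconv.sub_le_inner_gradient (Set.mem_univ _) (Set.mem_univ _) (hf ys)
  have herror := neg_two_mul_inner_sub_le (a := ys - xstar) (b := y0 - xstar) hc
    ((hr ys).trans_eq (by rw [norm_sub_rev])) ((hr y0).trans_eq (by rw [norm_sub_rev]))
  rw [hsplit, inner_add_right]
  linarith

/-- third supply-rate bound of Lemma 2 (convex case). -/
theorem statement7 {d : ℕ} (f fk : EuclideanSpace ℝ (Fin d) → ℝ) (c : ℝ) (hc : 0 ≤ c)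
    (hf : Differentiable ℝ f) (hconv : ConvexOn ℝ Set.univ f)
    (hfk : Differentiable ℝ fk)
    (xstar : EuclideanSpace ℝ (Fin d))
    (hmin : IsMinOn f Set.univ xstar) (hgrad0 : gradient f xstar = 0)
    (hr : ∀ y, ‖gradient (fun x => f x - fk x) xstar
        - gradient (fun x => f x - fk x) y‖ ≤ c * ‖xstar - y‖)
    (ys y0 : EuclideanSpace ℝ (Fin d)) :
    -2 * ⟪ys - xstar, gradient fk ys - gradient fk y0 + gradient f y0⟫_ℝ ≤
      -2 * (f ys - f xstar) + 3 * c * ‖ys - xstar‖ ^ 2 + c * ‖y0 - xstar‖ ^ 2 :=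
  statement7_general f fk c hc hf hconv hfk xstar hr ys y0
end

section
/- Let f be σ-strongly convex and differentiable with minimizer x*, and let f_k be differentiable with f - f_k being c-restricted smooth w.r.t. x*. Then for any y^s, y⁰, 2σ‖y^s - x*‖² - 2⟨y^s - x*, ∇f_k(y^s) - ∇f_k(y⁰) + ∇f(y⁰)⟩ ≤ 3c‖y^s - x*‖² + c‖y⁰ - x*‖². -/
/-!
With `G = ∇(f - f_k)`, the vector `∇f_k(y^s) - ∇f_k(y⁰) + ∇f(y⁰)` equals
`(∇f(y^s) - ∇f(x*)) - (G(y^s) - G(x*)) - (G(x*) - G(y⁰))`. Strong convexity makes the gradient of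
`f` strongly monotone (the gradient of the convex function `f - σ/2 ‖·‖²` is monotone, as one sees
on the line through the two points), which bounds the first term from below by `σ‖y^s - x*‖²`;
restricted smoothness and Cauchy–Schwarz bound the other two by `c‖y^s - x*‖²` and
`c‖y^s - x*‖‖y⁰ - x*‖`, and `2ab ≤ a² + b²` finishes.
-/

open InnerProductSpace Set

section

variable {E : Type*} [NormedAddCommGroup E]

theorem ConvexOn.fderiv_sub_apply_sub_nonneg [NormedSpace ℝ E] {g : E → ℝ}
    (hg : ConvexOn ℝ univ g) (hd : Differentiable ℝ g) (x y : E) :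
    0 ≤ (fderiv ℝ g y - fderiv ℝ g x) (y - x) := by
  have hline : ∀ t : ℝ, HasDerivAt (g ∘ AffineMap.lineMap x y)
      (fderiv ℝ g (AffineMap.lineMap x y t) (y - x)) t := fun t =>
    (hd _).hasFDerivAt.comp_hasDerivAt t AffineMap.hasDerivAt_lineMap
  have hmono := (hg.comp_affineMap (AffineMap.lineMap x y)).monotoneOn_deriv
    fun t _ => (hline t).differentiableAt
  have h01 := hmono (mem_univ 0) (mem_univ 1) zero_le_one
  rw [(hline 0).deriv, (hline 1).deriv, AffineMap.lineMap_apply_zero,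
    AffineMap.lineMap_apply_one] at h01
  simpa using h01

variable [InnerProductSpace ℝ E]

theorem StrongConvexOn.mul_norm_sub_sq_le_inner_gradient_sub [CompleteSpace E] {f : E → ℝ}
    {σ : ℝ} (hf : StrongConvexOn univ σ f) (hd : Differentiable ℝ f) (x y : E) :
    σ * ‖y - x‖ ^ 2 ≤ ⟪gradient f y - gradient f x, y - x⟫_ℝ := by
  have hg : ∀ z, HasFDerivAt (fun w => f w - σ / 2 * ‖w‖ ^ 2)
      (fderiv ℝ f z - (σ / 2) • (2 • innerSL ℝ z)) z := fun z =>
    (hd z).hasFDerivAt.sub ((hasStrictFDerivAt_norm_sq z).hasFDerivAt.const_mul (σ / 2))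
  have h := (strongConvexOn_iff_convex.mp hf).fderiv_sub_apply_sub_nonneg
    (fun z => (hg z).differentiableAt) x y
  rw [(hg x).fderiv, (hg y).fderiv] at h
  simp only [sub_apply, smul_apply, innerSL_apply_apply, smul_eq_mul, nsmul_eq_mul] at h
  rw [inner_sub_left, inner_gradient_left, inner_gradient_left, ← real_inner_self_eq_norm_sq,
    inner_sub_left]
  linarith

theorem gradient_sub [CompleteSpace E] {f g : E → ℝ} {x : E} (hf : DifferentiableAt ℝ f x)
    (hg : DifferentiableAt ℝ g x) :
    gradient (fun y => f y - g y) x = gradient f x - gradient g x := by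
  rw [gradient, fderiv_fun_sub hf hg, map_sub, gradient, gradient]

theorem inner_le_mul_norm_of_norm_le {u v w : E} {c : ℝ} (h : ‖v‖ ≤ c * ‖w‖) :
    ⟪u, v⟫_ℝ ≤ c * ‖u‖ * ‖w‖ :=
  calc ⟪u, v⟫_ℝ ≤ ‖u‖ * ‖v‖ := real_inner_le_norm u v
    _ ≤ ‖u‖ * (c * ‖w‖) := mul_le_mul_of_nonneg_left h (norm_nonneg u)
    _ = c * ‖u‖ * ‖w‖ := by ring

end

theorem statement8_general {d : ℕ} (f fk : EuclideanSpace ℝ (Fin d) → ℝ) (c σ : ℝ)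
    (hc : 0 ≤ c)
    (hf : Differentiable ℝ f) (hsc : StrongConvexOn Set.univ σ f)
    (hfk : Differentiable ℝ fk)
    (xstar : EuclideanSpace ℝ (Fin d))
    (hgrad0 : gradient f xstar = 0)
    (hr : ∀ y, ‖gradient (fun x => f x - fk x) xstar
        - gradient (fun x => f x - fk x) y‖ ≤ c * ‖xstar - y‖)
    (ys y0 : EuclideanSpace ℝ (Fin d)) :
    2 * σ * ‖ys - xstar‖ ^ 2
      - 2 * ⟪ys - xstar, gradient fk ys - gradient fk y0 + gradient f y0⟫_ℝ ≤
      3 * c * ‖ys - xstar‖ ^ 2 + c * ‖y0 - xstar‖ ^ 2 := by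
  set G := gradient fun x => f x - fk x
  have hsplit : gradient fk ys - gradient fk y0 + gradient f y0
      = (gradient f ys - gradient f xstar) - (G ys - G xstar) - (G xstar - G y0) := by
    simp only [G, gradient_sub (hf _) (hfk _), hgrad0]
    abel
  have hcoer : σ * ‖ys - xstar‖ ^ 2 ≤ ⟪ys - xstar, gradient f ys - gradient f xstar⟫_ℝ := by
    rw [real_inner_comm]
    exact hsc.mul_norm_sub_sq_le_inner_gradient_sub hf xstar ys
  have hsmooth_s : ⟪ys - xstar, G ys - G xstar⟫_ℝ ≤ c * ‖ys - xstar‖ * ‖ys - xstar‖ :=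
    inner_le_mul_norm_of_norm_le (by rw [norm_sub_rev, norm_sub_rev ys]; exact hr ys)
  have hsmooth_0 : ⟪ys - xstar, G xstar - G y0⟫_ℝ ≤ c * ‖ys - xstar‖ * ‖y0 - xstar‖ :=
    inner_le_mul_norm_of_norm_le (by rw [norm_sub_rev y0]; exact hr y0)
  have hamgm := mul_le_mul_of_nonneg_left (two_mul_le_add_sq ‖ys - xstar‖ ‖y0 - xstar‖) hc
  rw [hsplit, inner_sub_right, inner_sub_right]
  linarith

/-- supply-rate bound `S₂` of Lemma 5 (strongly convex case). -/
theorem statement8 {d : ℕ} (f fk : EuclideanSpace ℝ (Fin d) → ℝ) (c σ : ℝ)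
    (hc : 0 ≤ c) (hσ : 0 < σ)
    (hf : Differentiable ℝ f) (hsc : StrongConvexOn Set.univ σ f)
    (hfk : Differentiable ℝ fk)
    (xstar : EuclideanSpace ℝ (Fin d))
    (hmin : IsMinOn f Set.univ xstar) (hgrad0 : gradient f xstar = 0)
    (hr : ∀ y, ‖gradient (fun x => f x - fk x) xstar
        - gradient (fun x => f x - fk x) y‖ ≤ c * ‖xstar - y‖)
    (ys y0 : EuclideanSpace ℝ (Fin d)) :
    2 * σ * ‖ys - xstar‖ ^ 2
      - 2 * ⟪ys - xstar, gradient fk ys - gradient fk y0 + gradient f y0⟫_ℝ ≤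
      3 * c * ‖ys - xstar‖ ^ 2 + c * ‖y0 - xstar‖ ^ 2 :=
  statement8_general f fk c σ hc hf hsc hfk xstar hgrad0 hr ys y0
end

section
/- Let f be σ-strongly convex and L-smooth with minimizer x*, let ℓ_z for z ∈ M_k be L-smooth with average f_k, and suppose f - f_k is c-restricted smooth w.r.t. x*. Then for any y⁰, the average over z ∈ M_k of ‖∇ℓ_z(x*) - ∇ℓ_z(y⁰) + ∇f(y⁰)‖² is at most (L² + 2cL - σ²)·‖y⁰ - x*‖². -/
/-!
Write `a_z = ∇ℓ_z(x*) - ∇ℓ_z(y⁰)` and `g = ∇f(y⁰)`. Expanding the squares, the average of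
`‖a_z + g‖²` is the average of `‖a_z‖² ≤ L²‖y⁰ - x*‖²` plus `2⟪∇f_k(x*) - ∇f_k(y⁰), g⟫ + ‖g‖²`.
Since `∇f(x*) = 0`, the vector `∇f_k(x*) - ∇f_k(y⁰) + g` is `∇(f - f_k)(y⁰) - ∇(f - f_k)(x*)`, of
norm at most `c‖y⁰ - x*‖`, so the last two terms are at most `2cL‖y⁰ - x*‖² - ‖g‖²`. Finally
strong convexity makes `∇f` strongly monotone, whence `‖g‖ ≥ σ‖y⁰ - x*‖`.
-/

open InnerProductSpace

section Gradient

variable {E : Type*} [NormedAddCommGroup E] [InnerProductSpace ℝ E] [CompleteSpace E]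
  {f g : E → ℝ} {f' g' x : E}

theorem HasGradientAt.fun_sub (hf : HasGradientAt f f' x) (hg : HasGradientAt g g' x) :
    HasGradientAt (fun y => f y - g y) (f' - g') x := by
  rw [hasGradientAt_iff_hasFDerivAt] at *
  exact (map_sub (toDual ℝ E) f' g').symm ▸ hf.fun_sub hg

theorem HasGradientAt.div_const (hf : HasGradientAt f f' x) (c : ℝ) :
    HasGradientAt (fun y => f y / c) (c⁻¹ • f') x := by
  rw [hasGradientAt_iff_hasFDerivAt] at *
  simpa only [map_smul, div_eq_inv_mul] using hf.const_mul c⁻¹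

theorem HasGradientAt.fun_sum {ι : Type*} {u : Finset ι} {A : ι → E → ℝ} {A' : ι → E}
    (h : ∀ i ∈ u, HasGradientAt (A i) (A' i) x) :
    HasGradientAt (fun y => ∑ i ∈ u, A i y) (∑ i ∈ u, A' i) x := by
  simp only [hasGradientAt_iff_hasFDerivAt, map_sum] at *
  exact HasFDerivAt.fun_sum h

theorem hasGradientAt_half_mul_norm_sq (m : ℝ) (x : E) :
    HasGradientAt (fun y => m / 2 * ‖y‖ ^ 2) (m • x) x := by
  have hdual : toDual ℝ E (m • x) = (m / 2) • (2 • innerSL ℝ x) := by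
    ext v
    simp only [map_smul, smul_apply, toDual_apply_apply, smul_eq_mul,
      coe_innerSL_apply, nsmul_eq_mul, Nat.cast_ofNat]
    ring
  rw [hasGradientAt_iff_hasFDerivAt, hdual]
  exact (hasStrictFDerivAt_norm_sq x).hasFDerivAt.const_mul (m / 2)

end Gradient

section Convex

variable {E : Type*} [NormedAddCommGroup E] [InnerProductSpace ℝ E] [CompleteSpace E]
  {s : Set E} {f : E → ℝ} {x y : E}

theorem ConvexOn.inner_gradient_le_sub (hf : ConvexOn ℝ s f) (hx : x ∈ s) (hy : y ∈ s)
    (hfx : DifferentiableAt ℝ f x) : ⟪gradient f x, y - x⟫_ℝ ≤ f y - f x := by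
  set l : ℝ →ᵃ[ℝ] E := AffineMap.lineMap x y
  have hderiv : HasDerivAt (f ∘ l) ⟪gradient f x, y - x⟫_ℝ 0 := by
    have hl : HasDerivAt l (y - x) 0 := AffineMap.hasDerivAt_lineMap
    have hfl : HasFDerivAt f (fderiv ℝ f x) (l 0) := by simpa [l] using hfx.hasFDerivAt
    have := hfl.comp_hasDerivAt (0 : ℝ) hl
    rwa [← toDual_gradient, toDual_apply_apply] at this
  have := (hf.comp_affineMap l).le_slope_of_hasDerivAt (x := 0) (y := 1)
    (by simpa [l]) (by simpa [l]) one_pos hderiv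
  simpa [slope_def_field, l] using this

theorem StrongConvexOn.mul_norm_sub_sq_le_inner_gradient_sub_s9 {m : ℝ}
    (hf : StrongConvexOn s m f) (hx : x ∈ s) (hy : y ∈ s)
    (hfx : DifferentiableAt ℝ f x) (hfy : DifferentiableAt ℝ f y) :
    m * ‖x - y‖ ^ 2 ≤ ⟪gradient f x - gradient f y, x - y⟫_ℝ := by
  have hconv := strongConvexOn_iff_convex.mp hf
  have hgrad : ∀ z, DifferentiableAt ℝ f z → HasGradientAt (fun w => f w - m / 2 * ‖w‖ ^ 2)
      (gradient f z - m • z) z := fun z hz =>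
    hz.hasGradientAt.fun_sub (hasGradientAt_half_mul_norm_sq m z)
  have hxy := hconv.inner_gradient_le_sub hx hy (hgrad x hfx).differentiableAt
  have hyx := hconv.inner_gradient_le_sub hy hx (hgrad y hfy).differentiableAt
  rw [(hgrad x hfx).gradient] at hxy
  rw [(hgrad y hfy).gradient] at hyx
  have hsum : ⟪gradient f x - m • x - (gradient f y - m • y), x - y⟫_ℝ ≥ 0 := by
    rw [← neg_sub y x, inner_neg_right] at hyx ⊢
    rw [inner_sub_left]
    linarith
  rw [sub_sub_sub_comm, ← smul_sub, inner_sub_left, real_inner_smul_left,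
    real_inner_self_eq_norm_sq] at hsum
  linarith

theorem StrongConvexOn.mul_norm_sub_le_norm_gradient {m : ℝ} (hf : StrongConvexOn s m f)
    (hx : x ∈ s) (hy : y ∈ s) (hfx : DifferentiableAt ℝ f x) (hfy : DifferentiableAt ℝ f y)
    (hmin : gradient f x = 0) : m * ‖y - x‖ ≤ ‖gradient f y‖ := by
  have hmono := hf.mul_norm_sub_sq_le_inner_gradient_sub_s9 hy hx hfy hfx
  rw [hmin, sub_zero] at hmono
  rcases (norm_nonneg (y - x)).eq_or_lt with h0 | hpos
  · simp [← h0]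
  · refine le_of_mul_le_mul_right ?_ hpos
    calc m * ‖y - x‖ * ‖y - x‖ = m * ‖y - x‖ ^ 2 := by ring
      _ ≤ ⟪gradient f y, y - x⟫_ℝ := hmono
      _ ≤ ‖gradient f y‖ * ‖y - x‖ := real_inner_le_norm _ _

end Convex

theorem sum_norm_add_sq_le {E ι : Type*} [NormedAddCommGroup E] [InnerProductSpace ℝ E]
    (s : Finset ι) (a : ι → E) (D g : E) {A B C : ℝ}
    (hsum : ∑ i ∈ s, a i = (s.card : ℝ) • D) (ha : ∀ i ∈ s, ‖a i‖ ≤ A)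
    (hD : ‖D + g‖ ≤ B) (hg : ‖g‖ ≤ C) :
    ∑ i ∈ s, ‖a i + g‖ ^ 2 ≤ s.card * (A ^ 2 + 2 * B * C - ‖g‖ ^ 2) := by
  have hexpand : ∑ i ∈ s, ‖a i + g‖ ^ 2
      = ∑ i ∈ s, ‖a i‖ ^ 2 + 2 * s.card * ⟪D, g⟫_ℝ + s.card * ‖g‖ ^ 2 := by
    simp only [norm_add_sq_real, Finset.sum_add_distrib, ← Finset.mul_sum, ← sum_inner, hsum,
      real_inner_smul_left, Finset.sum_const, nsmul_eq_mul]
    ring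
  have hsq : ∑ i ∈ s, ‖a i‖ ^ 2 ≤ s.card * A ^ 2 := by
    simpa using Finset.sum_le_card_nsmul s _ _ fun i hi =>
      pow_le_pow_left₀ (norm_nonneg _) (ha i hi) 2
  have hcross : ⟪D, g⟫_ℝ ≤ B * C - ‖g‖ ^ 2 := by
    have hDg : ⟪D + g, g⟫_ℝ ≤ B * C :=
      (real_inner_le_norm _ _).trans
        (mul_le_mul hD hg (norm_nonneg _) ((norm_nonneg _).trans hD))
    rw [inner_add_left, real_inner_self_eq_norm_sq] at hDg
    linarith
  have hcard : (0 : ℝ) ≤ s.card := Nat.cast_nonneg _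
  nlinarith [mul_le_mul_of_nonneg_left hcross hcard]

theorem statement9_general {d : ℕ} {ι : Type*} (M : Finset ι) (hM : M.Nonempty)
    (ℓ : ι → EuclideanSpace ℝ (Fin d) → ℝ) (L c σ : ℝ) (hL : 0 ≤ L) (hσ : 0 < σ)
    (hdiff : ∀ z ∈ M, Differentiable ℝ (ℓ z))
    (hlip : ∀ z ∈ M, LipschitzWith L.toNNReal (gradient (ℓ z)))
    (f fk : EuclideanSpace ℝ (Fin d) → ℝ)
    (hfk : ∀ x, fk x = (∑ z ∈ M, ℓ z x) / M.card)
    (hf : Differentiable ℝ f)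
    (hsc : StrongConvexOn Set.univ σ f)
    (hflip : LipschitzWith L.toNNReal (gradient f))
    (xstar : EuclideanSpace ℝ (Fin d)) (hgrad0 : gradient f xstar = 0)
    (hr : ∀ y, ‖gradient (fun x => f x - fk x) xstar
        - gradient (fun x => f x - fk x) y‖ ≤ c * ‖xstar - y‖)
    (y0 : EuclideanSpace ℝ (Fin d)) :
    (∑ z ∈ M, ‖gradient (ℓ z) xstar - gradient (ℓ z) y0 + gradient f y0‖ ^ 2) / M.card ≤
      (L ^ 2 + 2 * c * L - σ ^ 2) * ‖y0 - xstar‖ ^ 2 := by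
  set n : ℝ := (M.card : ℝ)
  have hn : 0 < n := by simpa [n] using hM.card_pos
  have hL' : (L.toNNReal : ℝ) = L := Real.coe_toNNReal L hL
  have hfk_grad : ∀ y, HasGradientAt fk (n⁻¹ • ∑ z ∈ M, gradient (ℓ z) y) y := fun y => by
    rw [show fk = fun x => (∑ z ∈ M, ℓ z x) / n from funext hfk]
    exact (HasGradientAt.fun_sum fun z hz => (hdiff z hz y).hasGradientAt).div_const n
  have hsum : ∑ z ∈ M, (gradient (ℓ z) xstar - gradient (ℓ z) y0)
      = n • (gradient fk xstar - gradient fk y0) := by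
    rw [(hfk_grad _).gradient, (hfk_grad _).gradient, ← smul_sub, smul_smul,
      mul_inv_cancel₀ hn.ne', one_smul, Finset.sum_sub_distrib]
  have hrestr : ‖gradient fk xstar - gradient fk y0 + gradient f y0‖ ≤ c * ‖y0 - xstar‖ := by
    have hgrad_sub : ∀ y, gradient (fun x => f x - fk x) y = gradient f y - gradient fk y :=
      fun y => ((hf y).hasGradientAt.fun_sub (hfk_grad y).differentiableAt.hasGradientAt).gradient
    have h := hr y0
    rw [hgrad_sub, hgrad_sub, hgrad0, norm_sub_rev xstar] at h
    rwa [← norm_neg, show -(0 - gradient fk xstar - (gradient f y0 - gradient fk y0))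
      = gradient fk xstar - gradient fk y0 + gradient f y0 by abel] at h
  have hlip_ℓ : ∀ z ∈ M, ‖gradient (ℓ z) xstar - gradient (ℓ z) y0‖ ≤ L * ‖y0 - xstar‖ :=
    fun z hz => by simpa [hL', norm_sub_rev xstar] using (hlip z hz).norm_sub_le xstar y0
  have hlip_f : ‖gradient f y0‖ ≤ L * ‖y0 - xstar‖ := by
    simpa [hgrad0, hL'] using hflip.norm_sub_le y0 xstar
  have hσ_f : σ * ‖y0 - xstar‖ ≤ ‖gradient f y0‖ :=
    hsc.mul_norm_sub_le_norm_gradient trivial trivial (hf _) (hf _) hgrad0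
  have key := sum_norm_add_sq_le M _ _ _ hsum hlip_ℓ hrestr hlip_f
  have hσ_sq : (σ * ‖y0 - xstar‖) ^ 2 ≤ ‖gradient f y0‖ ^ 2 :=
    pow_le_pow_left₀ (by positivity) hσ_f 2
  rw [div_le_iff₀ hn]
  nlinarith [mul_le_mul_of_nonneg_left hσ_sq hn.le]

/-- supply-rate bound `S₁` of Lemma 5 (without convexity of the samples). -/
theorem statement9 {d : ℕ} {ι : Type*} (M : Finset ι) (hM : M.Nonempty)
    (ℓ : ι → EuclideanSpace ℝ (Fin d) → ℝ) (L c σ : ℝ) (hL : 0 ≤ L) (hc : 0 ≤ c) (hσ : 0 < σ)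
    (hdiff : ∀ z ∈ M, Differentiable ℝ (ℓ z))
    (hlip : ∀ z ∈ M, LipschitzWith L.toNNReal (gradient (ℓ z)))
    (f fk : EuclideanSpace ℝ (Fin d) → ℝ)
    (hfk : ∀ x, fk x = (∑ z ∈ M, ℓ z x) / M.card)
    (hf : Differentiable ℝ f) (hfkd : Differentiable ℝ fk)
    (hsc : StrongConvexOn Set.univ σ f)
    (hflip : LipschitzWith L.toNNReal (gradient f))
    (xstar : EuclideanSpace ℝ (Fin d)) (hgrad0 : gradient f xstar = 0)
    (hr : ∀ y, ‖gradient (fun x => f x - fk x) xstar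
        - gradient (fun x => f x - fk x) y‖ ≤ c * ‖xstar - y‖)
    (y0 : EuclideanSpace ℝ (Fin d)) :
    (∑ z ∈ M, ‖gradient (ℓ z) xstar - gradient (ℓ z) y0 + gradient f y0‖ ^ 2) / M.card ≤
      (L ^ 2 + 2 * c * L - σ ^ 2) * ‖y0 - xstar‖ ^ 2 :=
  statement9_general M hM ℓ L c σ hL hσ hdiff hlip f fk hfk hf hsc hflip xstar hgrad0 hr y0
end

section
/- For the SARAH recursive gradient sequence: let y^{j+1} = y^j - η v^j with v^j = ∇ℓ_{z_j}(y^j) - ∇ℓ_{z_j}(y^{j-1}) + v^{j-1} where z_j is drawn uniformly from M_k, v⁰ = ∇f(y⁰), and f_k is the average of ℓ_z over M_k. Then for every s ≥ 1, E[‖∇f(y⁰) - ∇f_k(y⁰) + ∇f_k(y^s) - v^s‖²] = Σ_{j=1}^s E[‖v^j - v^{j-1}‖²] - Σ_{j=1}^s E[‖∇f_k(y^j) - ∇f_k(y^{j-1})‖²]. -/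
/-!
Write `e_s = ∇f(y⁰) - ∇f_k(y⁰) + ∇f_k(yˢ) - vˢ`, `D_j = vʲ - vʲ⁻¹` and
`B_j = ∇f_k(yʲ) - ∇f_k(yʲ⁻¹)`, so that `e_0 = 0` and `e_j = e_{j-1} + B_j - D_j`.
Resampling the sample drawn at step `j` while keeping all the others fixed leaves `e_{j-1}` and
`B_j` unchanged and turns `D_j` on average into `B_j`. Hence `D_j - B_j` is orthogonal (for the
uniform measure on sample paths) to both `e_{j-1}` and `B_j`, which gives
`E‖e_j‖² = E‖e_{j-1}‖² + E‖D_j‖² - E‖B_j‖²`; summing over `j` proves the identity.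
-/

open InnerProductSpace Function

section Orthogonality

variable {E Ω : Type*} [NormedAddCommGroup E] [InnerProductSpace ℝ E] [Fintype Ω]

theorem sum_norm_sq_add_sub_of_sum_inner_eq {e D B : Ω → E}
    (he : ∑ ω, ⟪e ω, D ω⟫_ℝ = ∑ ω, ⟪e ω, B ω⟫_ℝ)
    (hB : ∑ ω, ⟪B ω, D ω⟫_ℝ = ∑ ω, ⟪B ω, B ω⟫_ℝ) :
    ∑ ω, ‖e ω + (B ω - D ω)‖ ^ 2 = ∑ ω, ‖e ω‖ ^ 2 + ∑ ω, ‖D ω‖ ^ 2 - ∑ ω, ‖B ω‖ ^ 2 := by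
  have hexpand : ∀ ω, ‖e ω + (B ω - D ω)‖ ^ 2 = ‖e ω‖ ^ 2 + ‖D ω‖ ^ 2 - ‖B ω‖ ^ 2
      + 2 * (⟪e ω, B ω⟫_ℝ - ⟪e ω, D ω⟫_ℝ) + 2 * (⟪B ω, B ω⟫_ℝ - ⟪B ω, D ω⟫_ℝ) := by
    intro ω
    rw [norm_add_sq_real, norm_sub_sq_real, inner_sub_right, real_inner_self_eq_norm_sq]
    ring
  simp only [hexpand, Finset.sum_add_distrib, Finset.sum_sub_distrib, ← Finset.mul_sum, he, hB]
  ring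

theorem sum_norm_sq_eq_of_sum_inner_eq {e D B : ℕ → Ω → E} {s : ℕ} (he0 : ∀ ω, e 0 ω = 0)
    (he_succ : ∀ t < s, ∀ ω, e (t + 1) ω = e t ω + (B (t + 1) ω - D (t + 1) ω))
    (he : ∀ t < s, ∑ ω, ⟪e t ω, D (t + 1) ω⟫_ℝ = ∑ ω, ⟪e t ω, B (t + 1) ω⟫_ℝ)
    (hB : ∀ t < s, ∑ ω, ⟪B (t + 1) ω, D (t + 1) ω⟫_ℝ = ∑ ω, ⟪B (t + 1) ω, B (t + 1) ω⟫_ℝ) :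
    ∑ ω, ‖e s ω‖ ^ 2 =
      ∑ j ∈ Finset.Icc 1 s, ∑ ω, ‖D j ω‖ ^ 2 - ∑ j ∈ Finset.Icc 1 s, ∑ ω, ‖B j ω‖ ^ 2 := by
  induction s with
  | zero => simp [he0]
  | succ t ih =>
    have ih := ih (fun r hr => he_succ r (by omega)) (fun r hr => he r (by omega))
      (fun r hr => hB r (by omega))
    simp only [he_succ t t.lt_succ_self,
      sum_norm_sq_add_sub_of_sum_inner_eq (he t t.lt_succ_self) (hB t t.lt_succ_self), ih,
      Finset.sum_Icc_succ_top (Nat.le_add_left 1 t)]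
    ring

end Orthogonality

section Resampling

variable {ι S : Type*} [DecidableEq ι] [Fintype ι] [Fintype S]

theorem card_nsmul_sum_eq_sum_sum_update {β : Type*} [AddCommMonoid β] (j : ι)
    (F : (ι → S) → β) :
    Fintype.card S • ∑ ω, F ω = ∑ ω, ∑ z, F (update ω j z) := by
  have hinv : Involutive fun p : (ι → S) × S => (update p.1 j p.2, p.1 j) := by
    intro p
    simp
  calc Fintype.card S • ∑ ω, F ω = ∑ p : (ι → S) × S, F p.1 := by
        simp [Fintype.sum_prod_type, Finset.smul_sum]
    _ = ∑ p : (ι → S) × S, F (update p.1 j p.2) :=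
        (hinv.bijective.sum_comp fun p => F p.1).symm
    _ = ∑ ω, ∑ z, F (update ω j z) := Fintype.sum_prod_type _

variable {E : Type*} [NormedAddCommGroup E] [InnerProductSpace ℝ E]

theorem card_nsmul_sum_inner_eq_sum_inner_sum_update (j : ι) {W D : (ι → S) → E}
    (hW : ∀ ω z, W (update ω j z) = W ω) :
    Fintype.card S • ∑ ω, ⟪W ω, D ω⟫_ℝ = ∑ ω, ⟪W ω, ∑ z, D (update ω j z)⟫_ℝ := by
  simp only [card_nsmul_sum_eq_sum_sum_update j, hW, inner_sum]

theorem sum_inner_eq_of_sum_update_eq [Nonempty S] (j : ι) {W D B : (ι → S) → E}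
    (hW : ∀ ω z, W (update ω j z) = W ω)
    (hDB : ∀ ω, ∑ z, D (update ω j z) = ∑ z, B (update ω j z)) :
    ∑ ω, ⟪W ω, D ω⟫_ℝ = ∑ ω, ⟪W ω, B ω⟫_ℝ := by
  apply nsmul_right_injective (Fintype.card_ne_zero (α := S))
  simp only [card_nsmul_sum_inner_eq_sum_inner_sum_update j hW, hDB]

end Resampling

section Sarah

variable {E S : Type*} [NormedAddCommGroup E] [InnerProductSpace ℝ E] {m : ℕ}

/-- `ω j` is the sample used at step `j + 1`, and `g z` is the gradient of the loss `ℓ_z`. -/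
structure IsSarahSequence (η : ℝ) (x0 g0 : E) (g : S → E → E)
    (y v : ℕ → (Fin m → S) → E) : Prop where
  y_zero : ∀ ω, y 0 ω = x0
  v_zero : ∀ ω, v 0 ω = g0
  y_succ : ∀ (j : Fin m) ω, y ((j : ℕ) + 1) ω = y (j : ℕ) ω - η • v (j : ℕ) ω
  v_succ : ∀ (j : Fin m) ω,
    v ((j : ℕ) + 1) ω = g (ω j) (y ((j : ℕ) + 1) ω) - g (ω j) (y (j : ℕ) ω) + v (j : ℕ) ω

namespace IsSarahSequence

variable {η : ℝ} {x0 g0 : E} {g : S → E → E} {y v : ℕ → (Fin m → S) → E}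

theorem eq_of_forall_lt (h : IsSarahSequence η x0 g0 g y v) {j : ℕ} (hj : j ≤ m)
    {ω ω' : Fin m → S} (hωω' : ∀ i : Fin m, (i : ℕ) < j → ω i = ω' i) :
    y j ω = y j ω' ∧ v j ω = v j ω' := by
  induction j with
  | zero => exact ⟨by rw [h.y_zero, h.y_zero], by rw [h.v_zero, h.v_zero]⟩
  | succ t ih =>
    obtain ⟨hy, hv⟩ := ih (by omega) fun i hi => hωω' i (by omega)
    have hy' := h.y_succ ⟨t, hj⟩
    have hv' := h.v_succ ⟨t, hj⟩
    simp only at hy' hv'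
    have hyt : y (t + 1) ω = y (t + 1) ω' := by rw [hy', hy', hy, hv]
    refine ⟨hyt, ?_⟩
    rw [hv', hv', hωω' ⟨t, hj⟩ (by simp), hyt, hy, hv]

variable (t : Fin m) (ω : Fin m → S) (z : S)

theorem update_of_le (h : IsSarahSequence η x0 g0 g y v) {j : ℕ} (hj : j ≤ t) :
    y j (update ω t z) = y j ω ∧ v j (update ω t z) = v j ω :=
  h.eq_of_forall_lt (hj.trans t.is_lt.le) fun i hi =>
    update_of_ne (Fin.ne_of_val_ne (by omega)) z ω

theorem y_succ_update (h : IsSarahSequence η x0 g0 g y v) :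
    y (t + 1) (update ω t z) = y (t + 1) ω := by
  rw [h.y_succ, h.y_succ, (h.update_of_le t ω z le_rfl).1, (h.update_of_le t ω z le_rfl).2]

theorem v_succ_sub_update (h : IsSarahSequence η x0 g0 g y v) :
    v (t + 1) (update ω t z) - v t (update ω t z) = g z (y (t + 1) ω) - g z (y t ω) := by
  rw [h.v_succ, update_self, h.y_succ_update, (h.update_of_le t ω z le_rfl).1]
  abel

theorem sum_inner_v_succ_sub [Fintype S] [Nonempty S] (h : IsSarahSequence η x0 g0 g y v)
    {G : E → E} (hG : ∀ x, G x = (Fintype.card S : ℝ)⁻¹ • ∑ z, g z x)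
    {W : (Fin m → S) → E} (hW : ∀ ω z, W (update ω t z) = W ω) :
    ∑ ω, ⟪W ω, v (t + 1) ω - v t ω⟫_ℝ = ∑ ω, ⟪W ω, G (y (t + 1) ω) - G (y t ω)⟫_ℝ := by
  refine sum_inner_eq_of_sum_update_eq t hW fun ω => ?_
  have hcard : (Fintype.card S : ℝ) ≠ 0 := Nat.cast_ne_zero.mpr Fintype.card_ne_zero
  simp only [h.v_succ_sub_update, h.y_succ_update, (h.update_of_le t ω _ le_rfl).1, hG,
    Finset.sum_const, Finset.card_univ, ← Nat.cast_smul_eq_nsmul ℝ, smul_smul,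
    mul_inv_cancel₀ hcard, one_smul, ← smul_sub, Finset.sum_sub_distrib]

end IsSarahSequence

end Sarah

theorem hasGradientAt_finset_average {E ι : Type*} [NormedAddCommGroup E]
    [InnerProductSpace ℝ E] [CompleteSpace E] {M : Finset ι} {ℓ : ι → E → ℝ}
    (hdiff : ∀ z ∈ M, Differentiable ℝ (ℓ z)) (x : E) :
    HasGradientAt (fun x => (∑ z ∈ M, ℓ z x) / M.card)
      ((M.card : ℝ)⁻¹ • ∑ z ∈ M, gradient (ℓ z) x) x := by
  have hsum : HasFDerivAt (fun x => ∑ z ∈ M, ℓ z x) (∑ z ∈ M, fderiv ℝ (ℓ z) x) x :=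
    HasFDerivAt.fun_sum fun z hz => (hdiff z hz x).hasFDerivAt
  rw [hasGradientAt_iff_hasFDerivAt, map_smul, map_sum]
  simpa only [toDual_gradient, div_eq_inv_mul, smul_eq_mul] using
    hsum.fun_const_smul (M.card : ℝ)⁻¹

theorem statement10_general {d : ℕ} {ι : Type*} (M : Finset ι) (hM : M.Nonempty)
    (ℓ : ι → EuclideanSpace ℝ (Fin d) → ℝ)
    (hdiff : ∀ z ∈ M, Differentiable ℝ (ℓ z))
    (f fk : EuclideanSpace ℝ (Fin d) → ℝ)
    (hfk : ∀ x, fk x = (∑ z ∈ M, ℓ z x) / M.card)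
    (m : ℕ) (η : ℝ) (x0 : EuclideanSpace ℝ (Fin d))
    (y v : ℕ → (Fin m → {z // z ∈ M}) → EuclideanSpace ℝ (Fin d))
    (hy0 : ∀ ω, y 0 ω = x0)
    (hv0 : ∀ ω, v 0 ω = gradient f x0)
    (hyrec : ∀ j : Fin m, ∀ ω, y ((j : ℕ) + 1) ω = y (j : ℕ) ω - η • v (j : ℕ) ω)
    (hvrec : ∀ j : Fin m, ∀ ω,
      v ((j : ℕ) + 1) ω =
        gradient (ℓ (ω j)) (y ((j : ℕ) + 1) ω) - gradient (ℓ (ω j)) (y (j : ℕ) ω)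
          + v (j : ℕ) ω)
    (s : ℕ) (hsm : s ≤ m) :
    (∑ ω : Fin m → {z // z ∈ M},
        ‖gradient f x0 - gradient fk x0 + gradient fk (y s ω) - v s ω‖ ^ 2)
        / (Fintype.card (Fin m → {z // z ∈ M})) =
      (∑ j ∈ Finset.Icc 1 s, (∑ ω : Fin m → {z // z ∈ M}, ‖v j ω - v (j - 1) ω‖ ^ 2)
          / (Fintype.card (Fin m → {z // z ∈ M})))
        - ∑ j ∈ Finset.Icc 1 s, (∑ ω : Fin m → {z // z ∈ M},
            ‖gradient fk (y j ω) - gradient fk (y (j - 1) ω)‖ ^ 2)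
          / (Fintype.card (Fin m → {z // z ∈ M})) := by
  have hS : IsSarahSequence η x0 (gradient f x0) (fun z : M => gradient (ℓ z)) y v :=
    ⟨hy0, hv0, hyrec, hvrec⟩
  have : Nonempty M := hM.to_subtype
  have hmean : ∀ x, gradient fk x = (Fintype.card M : ℝ)⁻¹ • ∑ z : M, gradient (ℓ z) x := by
    intro x
    rw [Fintype.card_coe, Finset.sum_coe_sort M fun z => gradient (ℓ z) x, funext hfk]
    exact (hasGradientAt_finset_average hdiff x).gradient
  rw [← Finset.sum_div, ← Finset.sum_div, ← sub_div]
  congr 1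
  refine sum_norm_sq_eq_of_sum_inner_eq
    (e := fun s ω => gradient f x0 - gradient fk x0 + gradient fk (y s ω) - v s ω)
    (D := fun j ω => v j ω - v (j - 1) ω)
    (B := fun j ω => gradient fk (y j ω) - gradient fk (y (j - 1) ω))
    (fun ω => by simp [hy0, hv0]) (fun t _ ω => by simp only [Nat.add_sub_cancel]; abel)
    (fun t ht => hS.sum_inner_v_succ_sub ⟨t, by omega⟩ hmean fun ω z => ?_)
    (fun t ht => hS.sum_inner_v_succ_sub ⟨t, by omega⟩ hmean fun ω z => ?_)
  · simp only [(hS.update_of_le ⟨t, by omega⟩ ω z le_rfl).1,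
      (hS.update_of_le ⟨t, by omega⟩ ω z le_rfl).2]
  · simp only [Nat.add_sub_cancel, hS.y_succ_update ⟨t, by omega⟩,
      (hS.update_of_le ⟨t, by omega⟩ ω z le_rfl).1]

/-- SARAH martingale-type identity (Lemma 6).  The randomness of the `m`
i.i.d. uniform samples from `M_k` is modeled by the uniform distribution over
`Fin m → {z // z ∈ M}`, so that expectations become averages over all sample paths. -/
theorem statement10 {d : ℕ} {ι : Type*} (M : Finset ι) (hM : M.Nonempty)
    (ℓ : ι → EuclideanSpace ℝ (Fin d) → ℝ)
    (hdiff : ∀ z ∈ M, Differentiable ℝ (ℓ z))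
    (f fk : EuclideanSpace ℝ (Fin d) → ℝ)
    (hfk : ∀ x, fk x = (∑ z ∈ M, ℓ z x) / M.card)
    (hf : Differentiable ℝ f) (hfkd : Differentiable ℝ fk)
    (m : ℕ) (η : ℝ) (x0 : EuclideanSpace ℝ (Fin d))
    (y v : ℕ → (Fin m → {z // z ∈ M}) → EuclideanSpace ℝ (Fin d))
    (hy0 : ∀ ω, y 0 ω = x0)
    (hv0 : ∀ ω, v 0 ω = gradient f x0)
    (hyrec : ∀ j : Fin m, ∀ ω, y ((j : ℕ) + 1) ω = y (j : ℕ) ω - η • v (j : ℕ) ω)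
    (hvrec : ∀ j : Fin m, ∀ ω,
      v ((j : ℕ) + 1) ω =
        gradient (ℓ (ω j)) (y ((j : ℕ) + 1) ω) - gradient (ℓ (ω j)) (y (j : ℕ) ω)
          + v (j : ℕ) ω)
    (s : ℕ) (hs1 : 1 ≤ s) (hsm : s ≤ m) :
    (∑ ω : Fin m → {z // z ∈ M},
        ‖gradient f x0 - gradient fk x0 + gradient fk (y s ω) - v s ω‖ ^ 2)
        / (Fintype.card (Fin m → {z // z ∈ M})) =
      (∑ j ∈ Finset.Icc 1 s, (∑ ω : Fin m → {z // z ∈ M}, ‖v j ω - v (j - 1) ω‖ ^ 2)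
          / (Fintype.card (Fin m → {z // z ∈ M})))
        - ∑ j ∈ Finset.Icc 1 s, (∑ ω : Fin m → {z // z ∈ M},
            ‖gradient fk (y j ω) - gradient fk (y (j - 1) ω)‖ ^ 2)
          / (Fintype.card (Fin m → {z // z ∈ M})) :=
  statement10_general M hM ℓ hdiff f fk hfk m η x0 y v hy0 hv0 hyrec hvrec s hsm
end

section
/- (One-step contraction for regularized SVRG argument) Let f be σ-strongly convex and L-smooth with minimizer x* and optimal value f*. For μ ≥ 0 and fixed x̃, define f^t(x) = f(x) + (μ/2)‖x - x̃‖², with minimum value f^{t*}. Then f(x̃) - f^{t*} ≥ (σ/(L+μ))·(f(x̃) - f*) and f(x̃) - f^{t*} ≥ (1 - μ/σ)·(f(x̃) - f*). -/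
/-!
Both bounds compare `f^{t*}` with the value of `f^t` at a well-chosen point. At the gradient step
`x̃ - ∇f(x̃) / (L + μ)` the descent lemma gives `f(x̃) - f^{t*} ≥ ‖∇f(x̃)‖² / (2(L + μ))`, and the
Polyak–Łojasiewicz inequality `‖∇f(x̃)‖² ≥ 2σ (f(x̃) - f*)` of a `σ`-strongly convex function turns
this into the first bound. At `x*`, quadratic growth `σ/2 ‖x̃ - x*‖² ≤ f(x̃) - f*` controls the
regularization term, which gives the second.
-/

open InnerProductSpace Set AffineMap
open scoped RealInnerProductSpace

theorem ConvexOn.add_le_of_hasFDerivAt {E : Type*} [NormedAddCommGroup E] [NormedSpace ℝ E]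
    {s : Set E} {g : E → ℝ} {g' : E →L[ℝ] ℝ} {x y : E}
    (hg : ConvexOn ℝ s g) (hx : x ∈ s) (hy : y ∈ s) (hg' : HasFDerivAt g g' x) :
    g x + g' (y - x) ≤ g y := by
  have hline : ConvexOn ℝ (lineMap (k := ℝ) x y ⁻¹' s) (g ∘ lineMap (k := ℝ) x y) :=
    hg.comp_affineMap _
  have hderiv : HasDerivAt (g ∘ lineMap (k := ℝ) x y) (g' (y - x)) 0 := by
    have hline' : HasDerivAt (lineMap (k := ℝ) x y) (y - x) 0 := hasDerivAt_lineMap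
    rw [← lineMap_apply_zero (k := ℝ) x y] at hg'
    exact hg'.comp_hasDerivAt 0 hline'
  have hslope :=
    hline.le_slope_of_hasDerivAt (by simpa using hx) (by simpa using hy) zero_lt_one hderiv
  simp only [slope_def_field, Function.comp_apply, lineMap_apply_zero, lineMap_apply_one,
    sub_zero, div_one] at hslope
  linarith

variable {E : Type*} [NormedAddCommGroup E] [InnerProductSpace ℝ E] [CompleteSpace E]

theorem StrongConvexOn.add_inner_add_le {s : Set E} {f : E → ℝ} {σ : ℝ} {x y g : E}
    (hf : StrongConvexOn s σ f) (hx : x ∈ s) (hy : y ∈ s) (hg : HasGradientAt f g x) :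
    f x + ⟪g, y - x⟫ + σ / 2 * ‖y - x‖ ^ 2 ≤ f y := by
  have hconv := strongConvexOn_iff_convex.mp hf
  have hderiv := (hasGradientAt_iff_hasFDerivAt.mp hg).sub
    ((hasStrictFDerivAt_norm_sq x).hasFDerivAt.const_mul (σ / 2))
  have := hconv.add_le_of_hasFDerivAt hx hy hderiv
  simp only [sub_apply, toDual_apply_apply, smul_apply,
    innerSL_apply_apply, smul_eq_mul, nsmul_eq_mul, Nat.cast_ofNat] at this
  rw [norm_sub_sq_real, real_inner_comm x y]
  rw [inner_sub_right x y x, real_inner_self_eq_norm_sq] at this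
  linarith

theorem StrongConvexOn.sub_le_norm_sq_div {s : Set E} {f : E → ℝ} {σ : ℝ} {x y g : E}
    (hf : StrongConvexOn s σ f) (hσ : 0 < σ) (hx : x ∈ s) (hy : y ∈ s)
    (hg : HasGradientAt f g x) :
    f x - f y ≤ ‖g‖ ^ 2 / (2 * σ) := by
  have hfirst_order := hf.add_inner_add_le hx hy hg
  have hcs := neg_le_of_abs_le (abs_real_inner_le_norm g (y - x))
  have hcomplete_sq : -(‖g‖ * ‖y - x‖) + σ / 2 * ‖y - x‖ ^ 2 ≥ -(‖g‖ ^ 2 / (2 * σ)) := by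
    rw [ge_iff_le, neg_le, ← sub_nonneg]
    have : 0 ≤ (σ * ‖y - x‖ - ‖g‖) ^ 2 / (2 * σ) := by positivity
    convert this using 1
    field_simp
    ring
  linarith

theorem StrongConvexOn.add_norm_sub_sq_le_of_isLocalMin {s : Set E} {f : E → ℝ} {σ : ℝ}
    {x z : E}
    (hf : StrongConvexOn s σ f) (hz : z ∈ s) (hx : x ∈ s) (hmin : IsLocalMin f z)
    (hdiff : DifferentiableAt ℝ f z) :
    f z + σ / 2 * ‖x - z‖ ^ 2 ≤ f x := by
  have hgrad : HasGradientAt f 0 z := by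
    simpa [gradient, hmin.fderiv_eq_zero] using hdiff.hasGradientAt
  simpa using hf.add_inner_add_le hz hx hgrad

theorem le_add_inner_add_of_lipschitzWith_gradient {f : E → ℝ} {f' : E → E} {K : NNReal}
    (hf : ∀ x, HasGradientAt f (f' x) x) (hK : LipschitzWith K f') (x y : E) :
    f y ≤ f x + ⟪f' x, y - x⟫ + K / 2 * ‖y - x‖ ^ 2 := by
  set v := y - x
  -- compare `f` along the segment with its quadratic upper model on `[0, 1]`
  have hderiv (t : ℝ) :
      HasDerivAt (fun t => f (lineMap x y t)) ⟪f' (lineMap x y t), v⟫ t := by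
    have := (hf (lineMap x y t)).hasFDerivAt.comp_hasDerivAt t hasDerivAt_lineMap
    simpa [Function.comp_def] using this
  have hbound_deriv (t : ℝ) :
      HasDerivAt (fun t => f x + t * ⟪f' x, v⟫ + K / 2 * t ^ 2 * ‖v‖ ^ 2)
        (⟪f' x, v⟫ + K * t * ‖v‖ ^ 2) t := by
    refine ((((hasDerivAt_id t).mul_const ⟪f' x, v⟫).const_add (f x)).fun_add
      (((hasDerivAt_pow 2 t).const_mul (K / 2 : ℝ)).mul_const (‖v‖ ^ 2))).congr_deriv ?_
    simp only [Nat.cast_ofNat]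
    ring
  have hslope (t : ℝ) (ht : 0 ≤ t) : ⟪f' (lineMap x y t), v⟫ ≤ ⟪f' x, v⟫ + K * t * ‖v‖ ^ 2 := by
    have hlip : ‖f' (lineMap x y t) - f' x‖ ≤ K * (t * ‖v‖) := by
      have := hK.dist_le_mul (lineMap x y t) x
      rwa [dist_eq_norm, dist_lineMap_left, Real.norm_of_nonneg ht, dist_comm,
        dist_eq_norm] at this
    calc ⟪f' (lineMap x y t), v⟫ = ⟪f' x, v⟫ + ⟪f' (lineMap x y t) - f' x, v⟫ := by
          rw [inner_sub_left]; ring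
      _ ≤ ⟪f' x, v⟫ + ‖f' (lineMap x y t) - f' x‖ * ‖v‖ := by
          gcongr; exact real_inner_le_norm _ _
      _ ≤ ⟪f' x, v⟫ + K * (t * ‖v‖) * ‖v‖ := by gcongr
      _ = ⟪f' x, v⟫ + K * t * ‖v‖ ^ 2 := by ring
  have := image_le_of_deriv_right_le_deriv_boundary
    (fun t _ => (hderiv t).continuousAt.continuousWithinAt)
    (fun t _ => (hderiv t).hasDerivWithinAt) (by simp)
    (fun t _ => (hbound_deriv t).continuousAt.continuousWithinAt)
    (fun t _ => (hbound_deriv t).hasDerivWithinAt) (fun t ht => hslope t ht.1)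
    (right_mem_Icc.mpr zero_le_one)
  simpa using this

theorem IsMinOn.add_norm_sub_sq_le_of_lipschitzWith {f : E → ℝ} {f' : E → E} {K : NNReal}
    {μ : ℝ} {x₀ z : E} (hmin : IsMinOn (fun x => f x + μ / 2 * ‖x - x₀‖ ^ 2) univ z)
    (hf : ∀ x, HasGradientAt f (f' x) x) (hK : LipschitzWith K f') (hKμ : 0 < K + μ) :
    f z + μ / 2 * ‖z - x₀‖ ^ 2 ≤ f x₀ - ‖f' x₀‖ ^ 2 / (2 * (K + μ)) := by
  set y := x₀ - (K + μ)⁻¹ • f' x₀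
  have hstep : y - x₀ = -((K + μ)⁻¹ • f' x₀) := by simp [y]
  have hinner : ⟪f' x₀, y - x₀⟫ = -((K + μ)⁻¹ * ‖f' x₀‖ ^ 2) := by
    rw [hstep, inner_neg_right, real_inner_smul_right, real_inner_self_eq_norm_sq]
  have hnorm : ‖y - x₀‖ = (K + μ)⁻¹ * ‖f' x₀‖ := by
    rw [hstep, norm_neg, norm_smul, Real.norm_of_nonneg (inv_pos.mpr hKμ).le]
  have hval : f y + μ / 2 * ‖y - x₀‖ ^ 2 ≤ f x₀ - ‖f' x₀‖ ^ 2 / (2 * (K + μ)) := by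
    have hdescent := le_add_inner_add_of_lipschitzWith_gradient hf hK x₀ y
    rw [hinner, hnorm] at hdescent
    rw [hnorm]
    have hexpand : -((K + μ)⁻¹ * ‖f' x₀‖ ^ 2) + (K + μ) / 2 * ((K + μ)⁻¹ * ‖f' x₀‖) ^ 2
        = -(‖f' x₀‖ ^ 2 / (2 * (K + μ))) := by
      field_simp
      ring
    linarith
  exact (hmin (mem_univ y)).trans hval

/-- lower bounds on `f(x̃) - f^{t*}` for the regularized function
`f^t(x) = f(x) + (μ/2)‖x - x̃‖²`. -/
theorem statement15 {d : ℕ} (f : EuclideanSpace ℝ (Fin d) → ℝ) (σ L μ : ℝ)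
    (hσ : 0 < σ) (hσL : σ ≤ L) (hμ : 0 ≤ μ)
    (hdiff : Differentiable ℝ f)
    (hsc : StrongConvexOn Set.univ σ f)
    (hlip : LipschitzWith L.toNNReal (gradient f))
    (xstar : EuclideanSpace ℝ (Fin d)) (hmin : IsMinOn f Set.univ xstar)
    (xt : EuclideanSpace ℝ (Fin d))
    (xtstar : EuclideanSpace ℝ (Fin d))
    (hmint : IsMinOn (fun x => f x + μ / 2 * ‖x - xt‖ ^ 2) Set.univ xtstar) :
    σ / (L + μ) * (f xt - f xstar) ≤
        f xt - (f xtstar + μ / 2 * ‖xtstar - xt‖ ^ 2) ∧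
      (1 - μ / σ) * (f xt - f xstar) ≤
        f xt - (f xtstar + μ / 2 * ‖xtstar - xt‖ ^ 2) := by
  have hL : (L.toNNReal : ℝ) = L := Real.coe_toNNReal L (by linarith)
  have hLμ : 0 < L + μ := by linarith
  have hgrad (x) : HasGradientAt f (gradient f x) x := (hdiff x).hasGradientAt
  have hdecrease := hmint.add_norm_sub_sq_le_of_lipschitzWith hgrad hlip (by rwa [hL])
  rw [hL] at hdecrease
  have hPL := hsc.sub_le_norm_sq_div hσ (mem_univ xt) (mem_univ xstar) (hgrad xt)
  have hgrowth := hsc.add_norm_sub_sq_le_of_isLocalMin (mem_univ xstar) (mem_univ xt)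
    (hmin.isLocalMin Filter.univ_mem) (hdiff xstar)
  constructor
  · calc σ / (L + μ) * (f xt - f xstar)
        ≤ σ / (L + μ) * (‖gradient f xt‖ ^ 2 / (2 * σ)) := by gcongr
      _ = ‖gradient f xt‖ ^ 2 / (2 * (L + μ)) := by field_simp
      _ ≤ _ := by linarith
  · have hreg : μ / 2 * ‖xstar - xt‖ ^ 2 ≤ μ / σ * (f xt - f xstar) := by
      calc μ / 2 * ‖xstar - xt‖ ^ 2 = μ / σ * (σ / 2 * ‖xt - xstar‖ ^ 2) := by
            rw [norm_sub_rev]; field_simp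
        _ ≤ μ / σ * (f xt - f xstar) := by gcongr; linarith
    have hfeas : f xtstar + μ / 2 * ‖xtstar - xt‖ ^ 2 ≤ f xstar + μ / 2 * ‖xstar - xt‖ ^ 2 :=
      hmint (mem_univ xstar)
    linarith
end

section
/- Let f be a σ-strongly convex and L-smooth function with minimizer x*, and let f^t be the (σ+μ)-strongly convex function f^t(x) = f(x) + (μ/2)‖x - x̃‖². If there exists 0 ≤ ν < 1 such that E[f^t(x̃') - f^{t*}] < ν·(f^t(x̃) - f^{t*}) for the update x̃ → x̃', then E[f(x̃') - f*] ≤ (1 - (1-ν)·max{σ/(L+μ), 1 - μ/σ})·(f(x̃) - f*). -/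
open InnerProductSpace MeasureTheory

/-- descent on the regularized function `f^t` implies descent on `f`
(key step of Theorem on D-RSVRG). -/
theorem statement16 {d : ℕ} {Ω : Type*} [MeasurableSpace Ω]
    (P : Measure Ω) [IsProbabilityMeasure P]
    (f : EuclideanSpace ℝ (Fin d) → ℝ) (σ L μ ν : ℝ)
    (hσ : 0 < σ) (hσL : σ ≤ L) (hμ : 0 ≤ μ) (hν0 : 0 ≤ ν) (hν1 : ν < 1)
    (hdiff : Differentiable ℝ f)
    (hsc : StrongConvexOn Set.univ σ f)
    (hlip : LipschitzWith L.toNNReal (gradient f))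
    (xstar : EuclideanSpace ℝ (Fin d)) (hmin : IsMinOn f Set.univ xstar)
    (xt : EuclideanSpace ℝ (Fin d))
    (xtstar : EuclideanSpace ℝ (Fin d))
    (hmint : IsMinOn (fun x => f x + μ / 2 * ‖x - xt‖ ^ 2) Set.univ xtstar)
    (x' : Ω → EuclideanSpace ℝ (Fin d))
    (hint1 : Integrable (fun ω => f (x' ω)) P)
    (hint2 : Integrable (fun ω => f (x' ω) + μ / 2 * ‖x' ω - xt‖ ^ 2) P)
    (hdesc : ∫ ω, (f (x' ω) + μ / 2 * ‖x' ω - xt‖ ^ 2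
          - (f xtstar + μ / 2 * ‖xtstar - xt‖ ^ 2)) ∂P <
        ν * (f xt - (f xtstar + μ / 2 * ‖xtstar - xt‖ ^ 2))) :
    ∫ ω, (f (x' ω) - f xstar) ∂P ≤
      (1 - (1 - ν) * max (σ / (L + μ)) (1 - μ / σ)) * (f xt - f xstar) := by
  set T := f xtstar + μ / 2 * ‖xtstar - xt‖ ^ 2 with hTdef
  set Δ := f xt - f xstar with hΔdef
  have hΔ0 : 0 ≤ Δ := sub_nonneg.2 (hmin (Set.mem_univ xt))
  -- quadratic lower bound from strong convexity at the minimizer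
  have hquad : σ / 2 * ‖xt - xstar‖ ^ 2 ≤ Δ := by
    have key : ∀ a : ℝ, a ∈ Set.Ioo (0:ℝ) 1 →
        (1 - a) * (σ / 2 * ‖xt - xstar‖ ^ 2) ≤ Δ := by
      rintro a ⟨ha, ha1⟩
      have hb : (0:ℝ) ≤ 1 - a := by linarith
      have h := hsc.2 (Set.mem_univ xt) (Set.mem_univ xstar) ha.le hb (by ring)
      have hm : f xstar ≤ f (a • xt + (1 - a) • xstar) :=
        hmin (Set.mem_univ _)
      simp only [smul_eq_mul] at h
      have h2 : a * ((1 - a) * (σ / 2 * ‖xt - xstar‖ ^ 2)) ≤ a * Δ := by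
        rw [hΔdef]; nlinarith [hm.trans h]
      exact le_of_mul_le_mul_left h2 ha
    have hlim : Filter.Tendsto (fun a : ℝ => (1 - a) * (σ / 2 * ‖xt - xstar‖ ^ 2))
        (nhdsWithin 0 (Set.Ioi 0)) (nhds ((1 - 0) * (σ / 2 * ‖xt - xstar‖ ^ 2))) :=
      (((continuous_const.sub continuous_id).mul continuous_const).tendsto 0).mono_left
        nhdsWithin_le_nhds
    have hev : ∀ᶠ a in nhdsWithin (0:ℝ) (Set.Ioi 0),
        (1 - a) * (σ / 2 * ‖xt - xstar‖ ^ 2) ≤ Δ := by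
      filter_upwards [Ioo_mem_nhdsGT_of_mem (Set.mem_Ico.2 ⟨le_refl (0:ℝ), one_pos⟩)]
        with a ha using key a ha
    have := le_of_tendsto hlim hev
    simpa using this
  -- bound 2 : (1 - μ/σ) Δ ≤ f xt - T
  have hb2 : (1 - μ / σ) * Δ ≤ f xt - T := by
    have h1 : T ≤ f xstar + μ / 2 * ‖xstar - xt‖ ^ 2 :=
      isMinOn_iff.mp hmint xstar (Set.mem_univ _)
    rw [norm_sub_rev] at h1
    have h3 : μ / σ * (σ / 2 * ‖xt - xstar‖ ^ 2) = μ / 2 * ‖xt - xstar‖ ^ 2 := by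
      field_simp
    have h4 := mul_le_mul_of_nonneg_left hquad (div_nonneg hμ hσ.le)
    rw [h3] at h4
    have : (1 - μ / σ) * Δ = Δ - μ / σ * Δ := by ring
    linarith [this]
  -- bound 1 : σ/(L+μ) Δ ≤ f xt - T
  have hb1 : σ / (L + μ) * Δ ≤ f xt - T := by
    set α := σ / (σ + μ) with hα
    have hσμ : 0 < σ + μ := by linarith
    have hα0 : 0 < α := div_pos hσ hσμ
    have hα1 : α ≤ 1 := by rw [hα, div_le_one hσμ]; linarith
    have hcomb := hsc.2 (Set.mem_univ xstar) (Set.mem_univ xt) hα0.le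
      (by linarith : (0:ℝ) ≤ 1 - α) (by ring)
    have hz : T ≤ f (α • xstar + (1 - α) • xt)
        + μ / 2 * ‖α • xstar + (1 - α) • xt - xt‖ ^ 2 :=
      isMinOn_iff.mp hmint _ (Set.mem_univ _)
    have hnorm : ‖α • xstar + (1 - α) • xt - xt‖ ^ 2 = α ^ 2 * ‖xstar - xt‖ ^ 2 := by
      have heq : α • xstar + (1 - α) • xt - xt = α • (xstar - xt) := by module
      rw [heq, norm_smul, Real.norm_eq_abs, abs_of_pos hα0, mul_pow]
    simp only [smul_eq_mul] at hcomb
    rw [hnorm] at hz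
    have hkey : α * (σ + μ) = σ := by rw [hα]; field_simp
    have hc0 : μ / 2 * (α ^ 2 * ‖xstar - xt‖ ^ 2)
        = α * (1 - α) * (σ / 2 * ‖xstar - xt‖ ^ 2) := by
      linear_combination (‖xstar - xt‖ ^ 2 * α / 2) * hkey
    have h4 : T ≤ α * f xstar + (1 - α) * f xt := by
      calc T ≤ f (α • xstar + (1 - α) • xt) + μ / 2 * (α ^ 2 * ‖xstar - xt‖ ^ 2) := hz
        _ ≤ α * f xstar + (1 - α) * f xt
            - α * (1 - α) * (σ / 2 * ‖xstar - xt‖ ^ 2)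
            + μ / 2 * (α ^ 2 * ‖xstar - xt‖ ^ 2) := by linarith
        _ = α * f xstar + (1 - α) * f xt := by rw [hc0]; ring
    have h5 : α * Δ ≤ f xt - T := by
      have he : α * Δ = α * f xt - α * f xstar := by rw [hΔdef]; ring
      have he2 : (1 - α) * f xt = f xt - α * f xt := by ring
      linarith
    have h6 : σ / (L + μ) ≤ α := by
      rw [hα]
      exact div_le_div_of_nonneg_left hσ.le hσμ (by linarith)
    nlinarith [mul_le_mul_of_nonneg_right h6 hΔ0]
  -- integral manipulations
  have hI1 : ∫ ω, (f (x' ω) - f xstar) ∂P = (∫ ω, f (x' ω) ∂P) - f xstar := by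
    rw [integral_sub hint1 (integrable_const _), integral_const]; simp
  have hI2 : ∫ ω, (f (x' ω) + μ / 2 * ‖x' ω - xt‖ ^ 2 - T) ∂P
      = (∫ ω, (f (x' ω) + μ / 2 * ‖x' ω - xt‖ ^ 2) ∂P) - T := by
    rw [integral_sub hint2 (integrable_const _), integral_const]; simp
  have hmono : (∫ ω, f (x' ω) ∂P) ≤ ∫ ω, (f (x' ω) + μ / 2 * ‖x' ω - xt‖ ^ 2) ∂P :=
    integral_mono hint1 hint2 fun ω => le_add_of_nonneg_right (by positivity)
  rw [hI2] at hdesc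
  rw [hI1]
  set I := ∫ ω, f (x' ω) ∂P
  have h7 : I - T < ν * (f xt - T) := by
    calc I - T ≤ (∫ ω, (f (x' ω) + μ / 2 * ‖x' ω - xt‖ ^ 2) ∂P) - T := by linarith
      _ < ν * (f xt - T) := hdesc
  have hcmax : max (σ / (L + μ)) (1 - μ / σ) * Δ ≤ f xt - T := by
    rcases le_total (σ / (L + μ)) (1 - μ / σ) with h | h
    · rw [max_eq_right h]; exact hb2
    · rw [max_eq_left h]; exact hb1
  have h8 := mul_le_mul_of_nonneg_left hcmax (by linarith : (0:ℝ) ≤ 1 - ν)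
  have he3 : (1 - (1 - ν) * max (σ / (L + μ)) (1 - μ / σ)) * Δ
      = Δ - (1 - ν) * (max (σ / (L + μ)) (1 - μ / σ) * Δ) := by ring
  have he4 : ν * (f xt - T) = (f xt - T) - (1 - ν) * (f xt - T) := by ring
  rw [he3]
  linarith [h7, h8, he4]
end
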